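/- Let p be a prime, F : F_{p^n} → F_{p^m}, c ∈ F_{p^m}. Then for all a ∈ F_{p^n} and b ∈ F_{p^m}: Σ_{y ∈ F_{p^n}} W_F(y,b) · conj(W_F(y,bc)) · ζ^{Tr_n(ay)} = p^n · Σ_{x ∈ F_{p^n}} ζ^{Tr_m(b(F(x+a) - c·F(x)))}. Consequently, the c-autocorrelation at (a,b) vanishes if and only if Σ_{y} W_F(y,b) conj(W_F(y,bc)) ζ^{Tr_n(ay)} = 0. -/

import Mathlib

open Finset Complex

noncomputable def zeta (p : ℕ) : ℂ := Complex.exp (2 * Real.pi * Complex.I / p)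

noncomputable def absTr (p : ℕ) (K : Type) [Field K] [Fintype K] [CharP K p] : K → ZMod p :=
  letI := ZMod.algebra K p
  Algebra.trace (ZMod p) K

/-!
Expanding `W_F(y,b) · conj (W_F(y,bc))` turns the left-hand side into a triple character sum
over `y, z, w`. Summing over `y` first, orthogonality of the additive character
`x ↦ ζ ^ Tr_n x` of `F_{p^n}` (primitive, since the trace is onto `F_p`) keeps only the
terms with `z = w + a`, which leaves `p ^ n` times the `c`-autocorrelation. The equivalence
follows because `p ^ n ≠ 0`.
-/

open ComplexConjugate

theorem AddChar.sum_fourier_mul_conj_fourier_mul {R : Type*} [CommRing R] [Fintype R]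
    {χ : AddChar R ℂ} (hχ : χ.IsPrimitive) (u v : R → ℂ) (a : R) :
    ∑ y, (∑ z, u z * χ (-(y * z))) * conj (∑ w, v w * χ (-(y * w))) * χ (a * y)
      = Fintype.card R * ∑ x, u (x + a) * conj (v x) := by
  classical
  have hχmul : ∀ y z w, χ (-(y * z)) * conj (χ (-(y * w))) * χ (a * y) = χ (y * (w + a - z)) := by
    intro y z w
    rw [← map_neg_eq_conj, neg_neg, ← AddChar.map_add_eq_mul, ← AddChar.map_add_eq_mul]
    ring_nf
  calc ∑ y, (∑ z, u z * χ (-(y * z))) * conj (∑ w, v w * χ (-(y * w))) * χ (a * y)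
      = ∑ z, ∑ w, u z * conj (v w) * ∑ y, χ (y * (w + a - z)) := by
        simp_rw [map_sum, map_mul, sum_mul_sum, sum_mul, mul_sum]
        rw [sum_comm]
        refine sum_congr rfl fun z _ => ?_
        rw [sum_comm]
        refine sum_congr rfl fun w _ => sum_congr rfl fun y _ => ?_
        rw [← hχmul]
        ring
    _ = ∑ w, u (w + a) * conj (v w) * Fintype.card R := by
        simp_rw [AddChar.sum_mulShift _ hχ, sub_eq_zero, Nat.cast_ite, Nat.cast_zero, mul_ite,
          mul_zero]
        rw [sum_comm]
        simp only [sum_ite_eq, mem_univ, if_true]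
    _ = Fintype.card R * ∑ x, u (x + a) * conj (v x) := by
        rw [mul_sum]
        simp_rw [mul_comm]

theorem isPrimitiveRoot_zeta (p : ℕ) [NeZero p] : IsPrimitiveRoot (zeta p) p :=
  Complex.isPrimitiveRoot_exp p (NeZero.ne p)

noncomputable def zetaChar (p : ℕ) [NeZero p] : AddChar (ZMod p) ℂ :=
  AddChar.zmodChar p (isPrimitiveRoot_zeta p).pow_eq_one

section TraceChar

variable (p : ℕ) (K : Type) [Field K] [Fintype K] [CharP K p]

theorem absTr_zero : absTr p K 0 = 0 :=
  map_zero _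

theorem absTr_add (x y : K) : absTr p K (x + y) = absTr p K x + absTr p K y :=
  map_add _ x y

theorem absTr_neg (x : K) : absTr p K (-x) = -absTr p K x :=
  map_neg _ x

variable [Fact p.Prime]

theorem absTr_surjective : Function.Surjective (absTr p K) :=
  letI := ZMod.algebra K p
  Algebra.trace_surjective (ZMod p) K

noncomputable def traceChar : AddChar K ℂ where
  toFun x := zetaChar p (absTr p K x)
  map_zero_eq_one' := by rw [absTr_zero, AddChar.map_zero_eq_one]
  map_add_eq_mul' x y := by rw [absTr_add, AddChar.map_add_eq_mul]

theorem traceChar_apply (x : K) : traceChar p K x = zeta p ^ (absTr p K x).val := rfl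

theorem traceChar_isPrimitive : (traceChar p K).IsPrimitive := by
  refine AddChar.IsPrimitive.of_ne_one (AddChar.ne_one_iff.mpr ?_)
  obtain ⟨x, hx⟩ := absTr_surjective p K 1
  refine ⟨x, ?_⟩
  rw [traceChar_apply, hx, ZMod.val_one]
  simpa using (isPrimitiveRoot_zeta p).ne_one (Fact.out : p.Prime).one_lt

end TraceChar

section Walsh

variable {K L : Type} [Field K] [Fintype K] [Field L] [Fintype L]

noncomputable def walsh (p : ℕ) [CharP K p] [CharP L p] (F : K → L) (y : K) (b : L) : ℂ :=
  ∑ z, zeta p ^ (absTr p L (b * F z) - absTr p K (y * z)).val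

noncomputable def cAutocorrelation (p : ℕ) [CharP L p] (F : K → L) (c : L) (a : K) (b : L) :
    ℂ :=
  ∑ x, zeta p ^ (absTr p L (b * (F (x + a) - c * F x))).val

variable {p : ℕ} [Fact p.Prime] [CharP L p]

theorem walsh_eq_sum_traceChar [CharP K p] (F : K → L) (y : K) (b : L) :
    walsh p F y b = ∑ z, traceChar p L (b * F z) * traceChar p K (-(y * z)) := by
  refine sum_congr rfl fun z _ => ?_
  rw [sub_eq_add_neg, ← absTr_neg]
  exact AddChar.map_add_eq_mul (zetaChar p) _ _

theorem cAutocorrelation_eq_sum_traceChar (F : K → L) (c : L) (a : K) (b : L) :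
    cAutocorrelation p F c a b
      = ∑ x, traceChar p L (b * F (x + a)) * conj (traceChar p L (b * c * F x)) := by
  refine sum_congr rfl fun x _ => ?_
  rw [← traceChar_apply, mul_sub, sub_eq_add_neg, AddChar.map_add_eq_mul,
    AddChar.map_neg_eq_conj, mul_assoc]

theorem sum_walsh_mul_conj_walsh_mul_zeta_pow [CharP K p] {n : ℕ} (hK : Fintype.card K = p ^ n)
    (F : K → L) (c : L) (a : K) (b : L) :
    ∑ y, walsh p F y b * conj (walsh p F y (b * c)) * zeta p ^ (absTr p K (a * y)).val
      = (p : ℂ) ^ n * cAutocorrelation p F c a b := by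
  simp_rw [walsh_eq_sum_traceChar, ← traceChar_apply,
    AddChar.sum_fourier_mul_conj_fourier_mul (traceChar_isPrimitive p K), hK, Nat.cast_pow,
    cAutocorrelation_eq_sum_traceChar]

end Walsh

theorem stmt_5_general (p n : ℕ) [Fact p.Prime]
    (K L : Type) [Field K] [Fintype K] [CharP K p] [Field L] [Fintype L] [CharP L p]
    (hK : Fintype.card K = p ^ n)
    (F : K → L) (c : L) (a : K) (b : L) :
    (∑ y : K, (∑ z : K, zeta p ^ (absTr p L (b * F z) - absTr p K (y * z)).val)
        * (starRingEnd ℂ) (∑ z : K, zeta p ^ (absTr p L (b * c * F z) - absTr p K (y * z)).val)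
        * zeta p ^ (absTr p K (a * y)).val)
      = (p : ℂ) ^ n * ∑ x : K, zeta p ^ (absTr p L (b * (F (x + a) - c * F x))).val
    ∧ ((∑ x : K, zeta p ^ (absTr p L (b * (F (x + a) - c * F x))).val) = 0 ↔
        (∑ y : K, (∑ z : K, zeta p ^ (absTr p L (b * F z) - absTr p K (y * z)).val)
          * (starRingEnd ℂ)
              (∑ z : K, zeta p ^ (absTr p L (b * c * F z) - absTr p K (y * z)).val)
          * zeta p ^ (absTr p K (a * y)).val) = 0) := by
  have key := sum_walsh_mul_conj_walsh_mul_zeta_pow hK F c a b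
  simp only [walsh, cAutocorrelation] at key
  have hpn : (p : ℂ) ^ n ≠ 0 := pow_ne_zero n (Nat.cast_ne_zero.mpr (Fact.out : p.Prime).ne_zero)
  exact ⟨key, by rw [key, mul_eq_zero_iff_left hpn]⟩

/-- `Σ_y W_F(y,b) conj(W_F(y,bc)) ζ^{Tr_n(ay)} = p^n · cC_F(a,b)`; consequently the
c-autocorrelation at (a,b) vanishes iff the left-hand side does. -/
theorem stmt_5 (p n m : ℕ) [Fact p.Prime]
    (K L : Type) [Field K] [Fintype K] [CharP K p] [Field L] [Fintype L] [CharP L p]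
    (hK : Fintype.card K = p ^ n) (hL : Fintype.card L = p ^ m)
    (F : K → L) (c : L) (a : K) (b : L) :
    (∑ y : K, (∑ z : K, zeta p ^ (absTr p L (b * F z) - absTr p K (y * z)).val)
        * (starRingEnd ℂ) (∑ z : K, zeta p ^ (absTr p L (b * c * F z) - absTr p K (y * z)).val)
        * zeta p ^ (absTr p K (a * y)).val)
      = (p : ℂ) ^ n * ∑ x : K, zeta p ^ (absTr p L (b * (F (x + a) - c * F x))).val
    ∧ ((∑ x : K, zeta p ^ (absTr p L (b * (F (x + a) - c * F x))).val) = 0 ↔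
        (∑ y : K, (∑ z : K, zeta p ^ (absTr p L (b * F z) - absTr p K (y * z)).val)
          * (starRingEnd ℂ)
              (∑ z : K, zeta p ^ (absTr p L (b * c * F z) - absTr p K (y * z)).val)
          * zeta p ^ (absTr p K (a * y)).val) = 0) :=
  stmt_5_general p n K L hK F c a b
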